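/- Let Ω be a set, Σ : Ω × Ω → ℝ arbitrary, n ≥ 1, and P, Q : Fin(n+1) → Ω. Let k ≠ l be indices in {0,1,…,n} and let P' be obtained from P by transposing the points with indices k and l (P' = P ∘ (k l)). Then for every Q : Fin(n+1) → Ω one has (P'⃗ⁿ.Q⃗ⁿ) = −(P⃗ⁿ.Q⃗ⁿ): permutation of any two points of an nth order multivector changes the sign of its scalar Σ-product with every multivector. -/

import Mathlib

/-!
Subtracting row `0` from the others and expanding along the first column shows that
`(-1)ⁿ (P⃗ⁿ.Q⃗ⁿ)` is the determinant of the `(n+1) × (n+1)` matrix whose `i`-th row is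
`(1, Σ(Pᵢ,Q₁) - Σ(Pᵢ,Q₀), …, Σ(Pᵢ,Qₙ) - Σ(Pᵢ,Q₀))`. In this form all points of `P` play the same
role, each indexing one row, so permuting the points of `P` permutes the rows and multiplies
the product by the sign of the permutation.
-/

/-- The scalar Σ-product `(P⃗ⁿ.Q⃗ⁿ)` of two `n`th order multivectors: the determinant
of the `n × n` matrix with entries `(P₀Pᵢ.Q₀Qₖ)`. -/
noncomputable def msp {Ω : Type} (W : Ω → Ω → ℝ) (n : ℕ) (P Q : Fin (n + 1) → Ω) : ℝ :=
  Matrix.det (Matrix.of fun i k : Fin n =>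
    W (P 0) (Q k.succ) + W (P i.succ) (Q 0) - W (P 0) (Q 0) - W (P i.succ) (Q k.succ))

theorem Matrix.det_of_cons_one {R : Type*} [CommRing R] {n : ℕ} (a : Fin (n + 1) → Fin n → R) :
    det (of fun i => Fin.cons 1 (a i)) = det (of fun i k => a i.succ k - a 0 k) := by
  set A : Matrix (Fin (n + 1)) (Fin (n + 1)) R := of fun i => Fin.cons 1 (a i)
  let c : Fin (n + 1) → R := Fin.cases 0 1
  set B : Matrix (Fin (n + 1)) (Fin (n + 1)) R := of fun i j => A i j - c i * A 0 j
  have hAB : det A = det B :=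
    det_eq_of_forall_row_eq_smul_add_const c 0 rfl fun i j => by simp [B, c]
  have hminor : B.submatrix Fin.succ Fin.succ = of fun i k => a i.succ k - a 0 k := by
    ext i k
    simp [A, B, c]
  have hcorner : B 0 0 = 1 := by simp [A, B, c]
  have hcol : ∀ i : Fin n, B i.succ 0 = 0 := by simp [A, B, c]
  rw [hAB, det_succ_column_zero, Fin.sum_univ_succ]
  simp [hcorner, hcol, hminor]

def mspBorderedMatrix {Ω : Type} (W : Ω → Ω → ℝ) (n : ℕ) (P Q : Fin (n + 1) → Ω) :
    Matrix (Fin (n + 1)) (Fin (n + 1)) ℝ :=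
  Matrix.of fun i => Fin.cons 1 fun k : Fin n => W (P i) (Q k.succ) - W (P i) (Q 0)

theorem msp_eq_neg_one_pow_mul_det_mspBorderedMatrix {Ω : Type} (W : Ω → Ω → ℝ) (n : ℕ)
    (P Q : Fin (n + 1) → Ω) :
    msp W n P Q = (-1) ^ n * (mspBorderedMatrix W n P Q).det := by
  have hneg : (Matrix.of fun i k : Fin n =>
      W (P 0) (Q k.succ) + W (P i.succ) (Q 0) - W (P 0) (Q 0) - W (P i.succ) (Q k.succ)) =
      -Matrix.of fun i k => (W (P i.succ) (Q k.succ) - W (P i.succ) (Q 0)) -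
        (W (P 0) (Q k.succ) - W (P 0) (Q 0)) := by
    ext i k
    simp only [Matrix.neg_apply, Matrix.of_apply]
    ring
  rw [mspBorderedMatrix, Matrix.det_of_cons_one, msp, hneg, Matrix.det_neg, Fintype.card_fin]

theorem mspBorderedMatrix_comp {Ω : Type} (W : Ω → Ω → ℝ) (n : ℕ) (P Q : Fin (n + 1) → Ω)
    (σ : Fin (n + 1) → Fin (n + 1)) :
    mspBorderedMatrix W n (P ∘ σ) Q = (mspBorderedMatrix W n P Q).submatrix σ id :=
  rfl

theorem msp_comp_perm {Ω : Type} (W : Ω → Ω → ℝ) (n : ℕ) (P Q : Fin (n + 1) → Ω)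
    (σ : Equiv.Perm (Fin (n + 1))) :
    msp W n (P ∘ σ) Q = σ.sign * msp W n P Q := by
  simp only [msp_eq_neg_one_pow_mul_det_mspBorderedMatrix, mspBorderedMatrix_comp,
    Matrix.det_permute, mul_left_comm]

theorem multivector_swap_changes_sign_general
    (Ω : Type) (W : Ω → Ω → ℝ) (n : ℕ)
    (P : Fin (n + 1) → Ω) (k l : Fin (n + 1)) (hkl : k ≠ l)
    (Q : Fin (n + 1) → Ω) :
    msp W n (P ∘ Equiv.swap k l) Q = -msp W n P Q := by
  rw [msp_comp_perm, Equiv.Perm.sign_swap hkl]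
  simp

/-- Permutation of any two points of an `n`th order multivector changes the sign of
its scalar Σ-product with every multivector. -/
theorem multivector_swap_changes_sign
    (Ω : Type) (W : Ω → Ω → ℝ) (n : ℕ) (hn : 1 ≤ n)
    (P : Fin (n + 1) → Ω) (k l : Fin (n + 1)) (hkl : k ≠ l)
    (Q : Fin (n + 1) → Ω) :
    msp W n (P ∘ Equiv.swap k l) Q = -msp W n P Q :=
  multivector_swap_changes_sign_general Ω W n P k l hkl Q
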